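/- Under the same hypotheses (b, r ∈ L^p([0,L]), 1 < p < ∞, exp(i∫₀^L b) ≠ 1), the function T_b r is Hölder continuous of order 1 − 1/p on the closed curve: there is a constant C depending on L, p, b such that |(T_b r)(s₁) − (T_b r)(s₂)| ≤ C |s₁ − s₂|^{1−1/p} ‖r‖_{L^p} for all s₁, s₂, where |s₁ − s₂| is interpreted as the distance on the circle ℝ/Lℤ. -/

import Mathlib

/-!
Write `Tb L b r s = c * ∫₀ᴸ r t * exp (i φ(s,t)) dt`, where `φ(s,t)` is the integral of `b` along
the arc of the circle from `s` to `t` and `c` does not depend on `s`. As `|φ| ≤ ‖b‖₁`, the two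
exponentials for `s₁ ≤ s₂` differ by at most `e^{‖b‖₁} |φ(s₁,t) - φ(s₂,t)|`, and this phase
difference is the integral of `b` over `[s₁, s₂]` when `t ∉ [s₁, s₂)`, and minus its integral over
the complementary arc otherwise. With `d = s₂ - s₁`, Hölder's inequality bounds these by
`d^{1-1/p} ‖b‖_p` and `(L - d)^{1-1/p} ‖b‖_p`, and bounds `∫ |r|` over `[s₁, s₂)` and over its
complement by `d^{1-1/p} ‖r‖_p` and `(L - d)^{1-1/p} ‖r‖_p`. In total the difference is at most
`2 e^{‖b‖₁} ‖b‖_p ‖r‖_p (d (L - d))^{1-1/p}`, and `d (L - d) ≤ L min(d, L - d)`.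
-/

open MeasureTheory Set intervalIntegral

/-- The solution operator `T_b` for the periodic ODE `-ih' + bh = r` on a closed curve of
length `L` parametrized by arc length. -/
noncomputable def Tb (L : ℝ) (b r : ℝ → ℂ) (s : ℝ) : ℂ :=
  Complex.I * (Complex.exp (Complex.I * ∫ t in (0:ℝ)..L, b t) - 1)⁻¹ *
    ∫ t in (0:ℝ)..L, r t * Complex.exp (Complex.I *
      (if s ≤ t then ∫ τ in s..t, b τ else (∫ τ in s..L, b τ) + ∫ τ in (0:ℝ)..t, b τ))

lemma norm_cexp_sub_cexp_le {x : ℝ} {z₁ z₂ : ℂ} (h₁ : ‖z₁‖ ≤ x) (h₂ : ‖z₂‖ ≤ x) :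
    ‖Complex.exp z₁ - Complex.exp z₂‖ ≤ Real.exp x * ‖z₁ - z₂‖ :=
  (convex_closedBall (0 : ℂ) x).norm_image_sub_le_of_norm_hasDerivWithin_le
    (fun z _ => (Complex.hasDerivAt_exp z).hasDerivWithinAt)
    (fun z hz => by
      rw [Complex.norm_exp]
      exact Real.exp_le_exp.2 ((Complex.re_le_norm z).trans (mem_closedBall_zero_iff.1 hz)))
    (mem_closedBall_zero_iff.2 h₂) (mem_closedBall_zero_iff.2 h₁)

lemma setIntegral_norm_le_rpow_mul_of_memLp {α E : Type*} [MeasurableSpace α]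
    [NormedAddCommGroup E] {μ : Measure α} {p m : ℝ} (hp : 1 ≤ p) (hm : 0 ≤ m)
    {f : α → E} {S A : Set α} (hSA : S ⊆ A) (hS : μ S ≤ ENNReal.ofReal m)
    (hf : MemLp f (ENNReal.ofReal p) (μ.restrict A)) :
    ∫ t in S, ‖f t‖ ∂μ ≤ m ^ (1 - 1 / p) * (∫ t in A, ‖f t‖ ^ p ∂μ) ^ (1 / p) := by
  have hp0 : 0 < p := zero_lt_one.trans_le hp
  have hα : 0 ≤ 1 - 1 / p := sub_nonneg.2 ((div_le_one hp0).2 hp)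
  have hrestr : μ.restrict S ≤ μ.restrict A := Measure.restrict_mono hSA le_rfl
  have hfS : MemLp f (ENNReal.ofReal p) (μ.restrict S) := hf.mono_measure hrestr
  have hLp : eLpNorm f (ENNReal.ofReal p) (μ.restrict A) =
      ENNReal.ofReal ((∫ t in A, ‖f t‖ ^ p ∂μ) ^ (1 / p)) := by
    rw [hf.eLpNorm_eq_integral_rpow_norm (by simpa using hp0) ENNReal.ofReal_ne_top,
      ENNReal.toReal_ofReal hp0.le, one_div]
  have : IsFiniteMeasure (μ.restrict S) :=
    ⟨by simpa using hS.trans_lt ENNReal.ofReal_lt_top⟩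
  have hholder : eLpNorm f 1 (μ.restrict S) ≤
      ENNReal.ofReal m ^ (1 - 1 / p) * eLpNorm f (ENNReal.ofReal p) (μ.restrict A) := by
    calc eLpNorm f 1 (μ.restrict S)
        ≤ eLpNorm f (ENNReal.ofReal p) (μ.restrict S) *
            μ.restrict S univ ^ (1 / (1 : ENNReal).toReal - 1 / (ENNReal.ofReal p).toReal) :=
          eLpNorm_le_eLpNorm_mul_rpow_measure_univ (by simpa using hp) hfS.1
      _ ≤ _ := by
          rw [Measure.restrict_apply_univ, ENNReal.toReal_ofReal hp0.le, ENNReal.toReal_one,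
            div_one, mul_comm]
          gcongr
  rw [hLp, ENNReal.ofReal_rpow_of_nonneg hm hα, ← ENNReal.ofReal_mul (by positivity),
    eLpNorm_one_eq_lintegral_enorm, ← ofReal_integral_norm_eq_lintegral_enorm
      (hfS.integrable (by simpa using hp))] at hholder
  exact (ENNReal.ofReal_le_ofReal_iff (by positivity)).1 hholder

lemma norm_setIntegral_le_integral_norm_of_subset {α E : Type*} [MeasurableSpace α]
    [NormedAddCommGroup E] [NormedSpace ℝ E] {μ : Measure α} {f : α → E} {S A : Set α}
    (hf : IntegrableOn f A μ) (hSA : S ⊆ A) :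
    ‖∫ t in S, f t ∂μ‖ ≤ ∫ t in A, ‖f t‖ ∂μ :=
  (MeasureTheory.norm_integral_le_integral_norm _).trans
    (setIntegral_mono_set hf.norm (ae_of_all _ fun _ => norm_nonneg _) hSA.eventuallyLE)

lemma MeasureTheory.IntegrableOn.intervalIntegrable_of_mem_Icc {E : Type*} [NormedAddCommGroup E]
    {f : ℝ → E} {a b u v : ℝ} (hf : IntegrableOn f (Ioc a b)) (hu : u ∈ Icc a b)
    (hv : v ∈ Icc a b) : IntervalIntegrable f volume u v :=
  intervalIntegrable_iff.2 (hf.mono_set (Ioc_subset_Ioc (le_min hu.1 hv.1) (max_le hu.2 hv.2)))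

lemma intervalIntegral_sub_intervalIntegral_eq_setIntegral_sdiff {E : Type*}
    [NormedAddCommGroup E] [NormedSpace ℝ E] {f : ℝ → E} {a b u v : ℝ}
    (hf : IntegrableOn f (Ioc a b)) (hau : a ≤ u) (huv : u ≤ v) (hvb : v ≤ b) :
    (∫ t in a..b, f t) - ∫ t in u..v, f t = ∫ t in Ioc a b \ Ioc u v, f t := by
  rw [integral_of_le (hau.trans (huv.trans hvb)), integral_of_le huv,
    setIntegral_sdiff measurableSet_Ioc hf (Ioc_subset_Ioc hau hvb)]

lemma volume_Ioc_sdiff_le {a b u v : ℝ} {I : Set ℝ} (hau : a ≤ u) (huv : u ≤ v) (hvb : v ≤ b)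
    (hI : Ioo u v ⊆ I) : volume (Ioc a b \ I) ≤ ENNReal.ofReal (b - a - (v - u)) := by
  calc volume (Ioc a b \ I) ≤ volume (Ioc a b \ Ioo u v) :=
        measure_mono (sdiff_subset_sdiff_right hI)
    _ = _ := by
      rw [measure_sdiff (Ioo_subset_Ioc_self.trans (Ioc_subset_Ioc hau hvb))
        measurableSet_Ioo.nullMeasurableSet measure_Ioo_lt_top.ne, Real.volume_Ioc,
        Real.volume_Ioo, ENNReal.ofReal_sub _ (sub_nonneg.2 huv)]

lemma setIntegral_le_of_le_on_inter_of_le_on_sdiff {α : Type*} [MeasurableSpace α]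
    {μ : Measure α} {A S : Set α} (hA : MeasurableSet A) (hS : MeasurableSet S) {f g : α → ℝ}
    (hg : IntegrableOn g A μ) (hf : IntegrableOn f A μ) {a c : ℝ}
    (h₁ : ∀ t ∈ A ∩ S, g t ≤ a * f t) (h₂ : ∀ t ∈ A \ S, g t ≤ c * f t) :
    ∫ t in A, g t ∂μ ≤ a * ∫ t in A ∩ S, f t ∂μ + c * ∫ t in A \ S, f t ∂μ := by
  rw [← integral_inter_add_sdiff hS hg, ← MeasureTheory.integral_const_mul,
    ← MeasureTheory.integral_const_mul]
  exact add_le_add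
    (setIntegral_mono_on (hg.mono_set inter_subset_left)
      ((hf.mono_set inter_subset_left).const_mul a) (hA.inter hS) h₁)
    (setIntegral_mono_on (hg.mono_set sdiff_subset) ((hf.mono_set sdiff_subset).const_mul c)
      (hA.diff hS) h₂)

lemma rpow_mul_rpow_sub_le_rpow_mul_min_rpow {d L α : ℝ} (hd : 0 ≤ d) (hdL : d ≤ L)
    (hα : 0 ≤ α) : d ^ α * (L - d) ^ α ≤ L ^ α * min d (L - d) ^ α := by
  rw [← Real.mul_rpow hd (sub_nonneg.2 hdL), ← Real.mul_rpow (hd.trans hdL)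
    (le_min hd (sub_nonneg.2 hdL))]
  refine Real.rpow_le_rpow (mul_nonneg hd (sub_nonneg.2 hdL)) ?_ hα
  rcases le_total d (L - d) with h | h
  · rw [min_eq_left h]; nlinarith
  · rw [min_eq_right h]; nlinarith

/-- The integral of `b` along the positively oriented arc of the circle `ℝ/Lℤ` from `s` to `t`. -/
noncomputable def phase (L : ℝ) (b : ℝ → ℂ) (s t : ℝ) : ℂ :=
  if s ≤ t then ∫ τ in s..t, b τ else (∫ τ in s..L, b τ) + ∫ τ in (0:ℝ)..t, b τ

section phase

variable {L : ℝ} {b : ℝ → ℂ}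

lemma phase_eq_primitive (hb : IntegrableOn b (Ioc 0 L)) {s t : ℝ} (hs : s ∈ Icc 0 L)
    (ht : t ∈ Icc 0 L) :
    phase L b s t = (∫ τ in (0:ℝ)..t, b τ) - (∫ τ in (0:ℝ)..s, b τ) +
      if t < s then ∫ τ in (0:ℝ)..L, b τ else 0 := by
  have h0 : (0:ℝ) ∈ Icc 0 L := ⟨le_rfl, hs.1.trans hs.2⟩
  have hL : L ∈ Icc 0 L := ⟨h0.2, le_rfl⟩
  unfold phase
  split_ifs with hst hts hts
  · exact absurd hst (not_le.2 hts)
  · rw [add_zero, integral_interval_sub_left (hb.intervalIntegrable_of_mem_Icc h0 ht)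
      (hb.intervalIntegrable_of_mem_Icc h0 hs)]
  · rw [← integral_interval_sub_left (hb.intervalIntegrable_of_mem_Icc h0 hL)
      (hb.intervalIntegrable_of_mem_Icc h0 hs)]
    ring
  · exact absurd (le_of_not_gt hts) hst

lemma norm_phase_le (hb : IntegrableOn b (Ioc 0 L)) {s t : ℝ} (hs : s ∈ Icc 0 L)
    (ht : t ∈ Icc 0 L) : ‖phase L b s t‖ ≤ ∫ τ in Ioc 0 L, ‖b τ‖ := by
  have h0 : (0:ℝ) ∈ Icc 0 L := ⟨le_rfl, hs.1.trans hs.2⟩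
  rw [phase_eq_primitive hb hs ht]
  split_ifs with hts
  · calc _ = ‖(∫ τ in (0:ℝ)..L, b τ) - ∫ τ in t..s, b τ‖ := by
          rw [← integral_interval_sub_left (hb.intervalIntegrable_of_mem_Icc h0 hs)
            (hb.intervalIntegrable_of_mem_Icc h0 ht)]
          ring_nf
      _ ≤ _ := by
          rw [intervalIntegral_sub_intervalIntegral_eq_setIntegral_sdiff hb ht.1 hts.le hs.2]
          exact norm_setIntegral_le_integral_norm_of_subset hb sdiff_subset
  · rw [add_zero, integral_interval_sub_left (hb.intervalIntegrable_of_mem_Icc h0 ht)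
      (hb.intervalIntegrable_of_mem_Icc h0 hs), integral_of_le (not_lt.1 hts)]
    exact norm_setIntegral_le_integral_norm_of_subset hb (Ioc_subset_Ioc hs.1 ht.2)

lemma phase_sub_phase (hb : IntegrableOn b (Ioc 0 L)) {s₁ s₂ t : ℝ} (hs₁ : s₁ ∈ Icc 0 L)
    (hs₂ : s₂ ∈ Icc 0 L) (ht : t ∈ Icc 0 L) (h12 : s₁ ≤ s₂) :
    phase L b s₁ t - phase L b s₂ t =
      (∫ τ in s₁..s₂, b τ) - if t ∈ Ico s₁ s₂ then ∫ τ in (0:ℝ)..L, b τ else 0 := by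
  have h0 : (0:ℝ) ∈ Icc 0 L := ⟨le_rfl, hs₁.1.trans hs₁.2⟩
  rw [phase_eq_primitive hb hs₁ ht, phase_eq_primitive hb hs₂ ht, ← integral_interval_sub_left
    (hb.intervalIntegrable_of_mem_Icc h0 hs₂) (hb.intervalIntegrable_of_mem_Icc h0 hs₁)]
  split_ifs <;> first | ring1 | (exfalso; grind)

lemma norm_phase_sub_phase_le {p : ℝ} (hp : 1 ≤ p)
    (hb : MemLp b (ENNReal.ofReal p) (volume.restrict (Ioc 0 L))) {s₁ s₂ t : ℝ}
    (hs₁ : s₁ ∈ Icc 0 L) (hs₂ : s₂ ∈ Icc 0 L) (ht : t ∈ Icc 0 L) (h12 : s₁ ≤ s₂) :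
    ‖phase L b s₁ t - phase L b s₂ t‖ ≤
      (if t ∈ Ico s₁ s₂ then L - (s₂ - s₁) else s₂ - s₁) ^ (1 - 1 / p) *
        (∫ τ in Ioc 0 L, ‖b τ‖ ^ p) ^ (1 / p) := by
  have hbi : IntegrableOn b (Ioc 0 L) := hb.integrable (by simpa using hp)
  rw [phase_sub_phase hbi hs₁ hs₂ ht h12]
  split_ifs
  · rw [← norm_neg, neg_sub, intervalIntegral_sub_intervalIntegral_eq_setIntegral_sdiff hbi hs₁.1
      h12 hs₂.2]
    refine (MeasureTheory.norm_integral_le_integral_norm _).trans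
      (setIntegral_norm_le_rpow_mul_of_memLp hp (by linarith [hs₁.1, hs₂.2]) sdiff_subset ?_ hb)
    exact (volume_Ioc_sdiff_le hs₁.1 h12 hs₂.2 Ioo_subset_Ioc_self).trans_eq (by rw [sub_zero])
  · rw [sub_zero, integral_of_le h12]
    refine (MeasureTheory.norm_integral_le_integral_norm _).trans
      (setIntegral_norm_le_rpow_mul_of_memLp hp (sub_nonneg.2 h12) (Ioc_subset_Ioc hs₁.1 hs₂.2)
        Real.volume_Ioc.le hb)

lemma aestronglyMeasurable_phase (hb : IntegrableOn b (Ioc 0 L)) {s : ℝ} (hs : s ∈ Icc 0 L) :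
    AEStronglyMeasurable (phase L b s) (volume.restrict (Ioc 0 L)) := by
  have h0 : (0:ℝ) ∈ Icc 0 L := ⟨le_rfl, hs.1.trans hs.2⟩
  have hprim : ContinuousOn (fun t => ∫ τ in (0:ℝ)..t, b τ) (Icc 0 L) := by
    simpa [uIcc_of_le h0.2] using continuousOn_primitive_interval'
      (hb.intervalIntegrable_of_mem_Icc h0 ⟨h0.2, le_rfl⟩) left_mem_uIcc
  have hformula : AEStronglyMeasurable (fun t => (∫ τ in (0:ℝ)..t, b τ) -
      (∫ τ in (0:ℝ)..s, b τ) + if t < s then ∫ τ in (0:ℝ)..L, b τ else 0)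
      (volume.restrict (Ioc 0 L)) :=
    (((hprim.aestronglyMeasurable measurableSet_Icc).mono_measure
      (Measure.restrict_mono Ioc_subset_Icc_self le_rfl)).sub aestronglyMeasurable_const).add
      (Measurable.ite measurableSet_Iio measurable_const measurable_const).aestronglyMeasurable
  exact hformula.congr (ae_restrict_of_forall_mem measurableSet_Ioc
    fun t ht => (phase_eq_primitive hb hs (Ioc_subset_Icc_self ht)).symm)

lemma integrableOn_mul_cexp_phase (hb : IntegrableOn b (Ioc 0 L)) {r : ℝ → ℂ}
    (hr : IntegrableOn r (Ioc 0 L)) {s : ℝ} (hs : s ∈ Icc 0 L) :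
    IntegrableOn (fun t => r t * Complex.exp (Complex.I * phase L b s t)) (Ioc 0 L) :=
  hr.mul_bdd (c := Real.exp (∫ τ in Ioc 0 L, ‖b τ‖))
    (Complex.continuous_exp.comp_aestronglyMeasurable
      ((aestronglyMeasurable_phase hb hs).const_mul _))
    (ae_restrict_of_forall_mem measurableSet_Ioc fun t ht => (Complex.norm_exp_le_exp_norm _).trans
      (by simpa using norm_phase_le hb hs (Ioc_subset_Icc_self ht)))

lemma norm_cexp_phase_sub_cexp_phase_le {p : ℝ} (hp : 1 ≤ p)
    (hb : MemLp b (ENNReal.ofReal p) (volume.restrict (Ioc 0 L))) {s₁ s₂ t : ℝ}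
    (hs₁ : s₁ ∈ Icc 0 L) (hs₂ : s₂ ∈ Icc 0 L) (ht : t ∈ Icc 0 L) (h12 : s₁ ≤ s₂) :
    ‖Complex.exp (Complex.I * phase L b s₁ t) - Complex.exp (Complex.I * phase L b s₂ t)‖ ≤
      Real.exp (∫ τ in Ioc 0 L, ‖b τ‖) *
        ((if t ∈ Ico s₁ s₂ then L - (s₂ - s₁) else s₂ - s₁) ^ (1 - 1 / p) *
          (∫ τ in Ioc 0 L, ‖b τ‖ ^ p) ^ (1 / p)) := by
  have hbi : IntegrableOn b (Ioc 0 L) := hb.integrable (by simpa using hp)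
  calc _ ≤ Real.exp (∫ τ in Ioc 0 L, ‖b τ‖) *
        ‖Complex.I * phase L b s₁ t - Complex.I * phase L b s₂ t‖ :=
        norm_cexp_sub_cexp_le (by simpa using norm_phase_le hbi hs₁ ht)
          (by simpa using norm_phase_le hbi hs₂ ht)
    _ = Real.exp (∫ τ in Ioc 0 L, ‖b τ‖) * ‖phase L b s₁ t - phase L b s₂ t‖ := by
        rw [← mul_sub, norm_mul, Complex.norm_I, one_mul]
    _ ≤ _ := by
        gcongr
        exact norm_phase_sub_phase_le hp hb hs₁ hs₂ ht h12

lemma norm_integral_mul_cexp_phase_sub_le {p : ℝ} (hp : 1 ≤ p)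
    (hb : MemLp b (ENNReal.ofReal p) (volume.restrict (Ioc 0 L))) {r : ℝ → ℂ}
    (hr : MemLp r (ENNReal.ofReal p) (volume.restrict (Ioc 0 L))) {s₁ s₂ : ℝ}
    (hs₁ : s₁ ∈ Icc 0 L) (hs₂ : s₂ ∈ Icc 0 L) (h12 : s₁ ≤ s₂) :
    ‖(∫ t in (0:ℝ)..L, r t * Complex.exp (Complex.I * phase L b s₁ t)) -
        ∫ t in (0:ℝ)..L, r t * Complex.exp (Complex.I * phase L b s₂ t)‖ ≤
      2 * Real.exp (∫ τ in Ioc 0 L, ‖b τ‖) * (∫ τ in Ioc 0 L, ‖b τ‖ ^ p) ^ (1 / p) *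
        L ^ (1 - 1 / p) * min (s₂ - s₁) (L - (s₂ - s₁)) ^ (1 - 1 / p) *
          (∫ τ in Ioc 0 L, ‖r τ‖ ^ p) ^ (1 / p) := by
  have hq : (1 : ENNReal) ≤ ENNReal.ofReal p := by simpa using hp
  have hri : IntegrableOn r (Ioc 0 L) := hr.integrable hq
  have hL : 0 ≤ L := hs₁.1.trans hs₁.2
  have hd : 0 ≤ s₂ - s₁ := sub_nonneg.2 h12
  have hdL : s₂ - s₁ ≤ L := by linarith [hs₁.1, hs₂.2]
  set E := fun s t => Complex.exp (Complex.I * phase L b s t)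
  set x := ∫ τ in Ioc 0 L, ‖b τ‖
  set Bp := (∫ τ in Ioc 0 L, ‖b τ‖ ^ p) ^ (1 / p)
  set Rp := (∫ τ in Ioc 0 L, ‖r τ‖ ^ p) ^ (1 / p)
  set α := 1 - 1 / p
  have hα : 0 ≤ α := sub_nonneg.2 ((div_le_one (zero_lt_one.trans_le hp)).2 hp)
  have hI₁ := integrableOn_mul_cexp_phase (hb.integrable hq) hri hs₁
  have hI₂ := integrableOn_mul_cexp_phase (hb.integrable hq) hri hs₂
  have hpointwise (t : ℝ) (ht : t ∈ Ioc 0 L) : ‖r t * E s₁ t - r t * E s₂ t‖ ≤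
      Real.exp x * ((if t ∈ Ico s₁ s₂ then L - (s₂ - s₁) else s₂ - s₁) ^ α * Bp) * ‖r t‖ := by
    rw [← mul_sub, norm_mul, mul_comm]
    gcongr
    exact norm_cexp_phase_sub_cexp_phase_le hp hb hs₁ hs₂ (Ioc_subset_Icc_self ht) h12
  have hsplit := setIntegral_le_of_le_on_inter_of_le_on_sdiff measurableSet_Ioc
    (measurableSet_Ico : MeasurableSet (Ico s₁ s₂)) (hI₁.sub hI₂).norm hri.norm
    (fun t ht => by simpa [ht.2] using hpointwise t ht.1)
    (fun t ht => by simpa [ht.2] using hpointwise t ht.1)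
  have hr₁ : ∫ t in Ioc 0 L ∩ Ico s₁ s₂, ‖r t‖ ≤ (s₂ - s₁) ^ α * Rp :=
    setIntegral_norm_le_rpow_mul_of_memLp hp hd inter_subset_left
      ((measure_mono inter_subset_right).trans Real.volume_Ico.le) hr
  have hr₂ : ∫ t in Ioc 0 L \ Ico s₁ s₂, ‖r t‖ ≤ (L - (s₂ - s₁)) ^ α * Rp :=
    setIntegral_norm_le_rpow_mul_of_memLp hp (sub_nonneg.2 hdL) sdiff_subset
      ((volume_Ioc_sdiff_le hs₁.1 h12 hs₂.2 Ioo_subset_Ico_self).trans_eq (by rw [sub_zero])) hr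
  calc _ = ‖∫ t in Ioc 0 L, (r t * E s₁ t - r t * E s₂ t)‖ := by
        rw [integral_of_le hL, integral_of_le hL, integral_sub hI₁ hI₂]
    _ ≤ ∫ t in Ioc 0 L, ‖r t * E s₁ t - r t * E s₂ t‖ :=
        MeasureTheory.norm_integral_le_integral_norm _
    _ ≤ _ := hsplit
    _ ≤ Real.exp x * ((L - (s₂ - s₁)) ^ α * Bp) * ((s₂ - s₁) ^ α * Rp) +
          Real.exp x * ((s₂ - s₁) ^ α * Bp) * ((L - (s₂ - s₁)) ^ α * Rp) := by
        gcongr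
    _ = 2 * Real.exp x * Bp * Rp * ((s₂ - s₁) ^ α * (L - (s₂ - s₁)) ^ α) := by ring
    _ ≤ 2 * Real.exp x * Bp * Rp * (L ^ α * min (s₂ - s₁) (L - (s₂ - s₁)) ^ α) := by
        gcongr 2 * Real.exp x * Bp * Rp * ?_
        exact rpow_mul_rpow_sub_le_rpow_mul_min_rpow hd hdL hα
    _ = _ := by ring

end phase

theorem stmt9_general (L p : ℝ) (hL : 0 < L) (hp : 1 < p) (b : ℝ → ℂ)
    (hb : MemLp b (ENNReal.ofReal p) (volume.restrict (Set.Ioc 0 L))) :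
    ∃ C > 0, ∀ r : ℝ → ℂ,
      MemLp r (ENNReal.ofReal p) (volume.restrict (Set.Ioc 0 L)) →
      ∀ s₁ ∈ Set.Icc (0:ℝ) L, ∀ s₂ ∈ Set.Icc (0:ℝ) L,
        ‖Tb L b r s₁ - Tb L b r s₂‖ ≤
          C * (min |s₁ - s₂| (L - |s₁ - s₂|)) ^ (1 - 1/p) *
            (∫ t in Set.Ioc (0:ℝ) L, ‖r t‖ ^ p) ^ (1/p) := by
  set c := Complex.I * (Complex.exp (Complex.I * ∫ t in (0:ℝ)..L, b t) - 1)⁻¹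
  set M := 2 * Real.exp (∫ τ in Ioc 0 L, ‖b τ‖) * (∫ τ in Ioc 0 L, ‖b τ‖ ^ p) ^ (1 / p) *
    L ^ (1 - 1 / p)
  refine ⟨‖c‖ * M + 1, by positivity, fun r hr s₁ hs₁ s₂ hs₂ => ?_⟩
  wlog h12 : s₁ ≤ s₂ generalizing s₁ s₂
  · simpa only [norm_sub_rev, abs_sub_comm] using this s₂ hs₂ s₁ hs₁ (le_of_not_ge h12)
  have hTb (s : ℝ) : Tb L b r s =
      c * ∫ t in (0:ℝ)..L, r t * Complex.exp (Complex.I * phase L b s t) := rfl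
  have hmin : 0 ≤ min (s₂ - s₁) (L - (s₂ - s₁)) := le_min (by linarith) (by linarith [hs₁.1, hs₂.2])
  rw [abs_sub_comm, abs_of_nonneg (sub_nonneg.2 h12), hTb, hTb, ← mul_sub, norm_mul]
  calc _ ≤ ‖c‖ * (M * min (s₂ - s₁) (L - (s₂ - s₁)) ^ (1 - 1 / p) *
        (∫ τ in Ioc 0 L, ‖r τ‖ ^ p) ^ (1 / p)) := by
        gcongr
        exact norm_integral_mul_cexp_phase_sub_le hp.le hb hr hs₁ hs₂ h12
    _ = ‖c‖ * M * min (s₂ - s₁) (L - (s₂ - s₁)) ^ (1 - 1 / p) *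
        (∫ τ in Ioc 0 L, ‖r τ‖ ^ p) ^ (1 / p) := by ring
    _ ≤ _ := by gcongr; linarith

/-- For `b, r ∈ L^p([0,L])`, `1 < p < ∞`, with `e^{i∫₀^L b} ≠ 1`, the function
`T_b r` is Hölder continuous of order `1 - 1/p` with respect to the distance on the circle
`ℝ/Lℤ`: `|(T_b r)(s₁) - (T_b r)(s₂)| ≤ C · min(|s₁-s₂|, L-|s₁-s₂|)^{1-1/p} · ‖r‖_{L^p}`,
with `C` depending only on `L`, `p`, `b`. -/
theorem stmt9 (L p : ℝ) (hL : 0 < L) (hp : 1 < p) (b : ℝ → ℂ)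
    (hb : MemLp b (ENNReal.ofReal p) (volume.restrict (Set.Ioc 0 L)))
    (hcomp : Complex.exp (Complex.I * ∫ t in (0:ℝ)..L, b t) ≠ 1) :
    ∃ C > 0, ∀ r : ℝ → ℂ,
      MemLp r (ENNReal.ofReal p) (volume.restrict (Set.Ioc 0 L)) →
      ∀ s₁ ∈ Set.Icc (0:ℝ) L, ∀ s₂ ∈ Set.Icc (0:ℝ) L,
        ‖Tb L b r s₁ - Tb L b r s₂‖ ≤
          C * (min |s₁ - s₂| (L - |s₁ - s₂|)) ^ (1 - 1/p) *
            (∫ t in Set.Ioc (0:ℝ) L, ‖r t‖ ^ p) ^ (1/p) :=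
  stmt9_general L p hL hp b hb
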